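/- arXiv:2510.02211 — 7 statements merged into one kernel-verified Lean document; each statement's English description precedes it below -/
import Mathlib

section
/- Every graph G of order n with minimum degree δ satisfies rad_p(G) ≤ n - δ. -/
open scoped Classical

/-- The closed neighbourhood `N[S]` of a finset of vertices. -/
noncomputable def closedNbhd {V : Type*} [Fintype V] (G : SimpleGraph V) (S : Finset V) :
    Finset V :=
  S ∪ S.biUnion fun v => G.neighborFinset v

/-- One propagation step of power domination. -/
noncomputable def pdStep {V : Type*} [Fintype V] (G : SimpleGraph V) (A : Finset V) : Finset V :=
  A ∪ closedNbhd G (A.filter fun v => (G.neighborFinset v \ A).card ≤ 1)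

/-- The monitored sets `P^i(S)`, with `P^0(S) = ∅` and `P^1(S) = N[S]`. -/
noncomputable def pdSeq {V : Type*} [Fintype V] (G : SimpleGraph V) (S : Finset V) : ℕ → Finset V
  | 0 => ∅
  | 1 => closedNbhd G S
  | (i + 2) => pdStep G (pdSeq G S (i + 1))

/-- `S` is a power dominating set of `G`. -/
def IsPDS {V : Type*} [Fintype V] (G : SimpleGraph V) (S : Finset V) : Prop :=
  ∃ i, pdSeq G S i = Finset.univ

/-- The power domination number `γ_p(G)`. -/
noncomputable def pdNum {V : Type*} [Fintype V] (G : SimpleGraph V) : ℕ :=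
  sInf {k | ∃ S : Finset V, IsPDS G S ∧ S.card = k}

/-- The propagation radius `rad_p(G, S)` of a PDS `S`. -/
noncomputable def pdRadS {V : Type*} [Fintype V] (G : SimpleGraph V) (S : Finset V) : ℕ :=
  sInf {i | pdSeq G S i = Finset.univ}

/-- The propagation radius `rad_p(G)`. -/
noncomputable def pdRad {V : Type*} [Fintype V] (G : SimpleGraph V) : ℕ :=
  sInf {r | ∃ S : Finset V, IsPDS G S ∧ S.card = pdNum G ∧ pdRadS G S = r}

section lemmas
variable {V : Type*} [Fintype V] (G : SimpleGraph V) (S A : Finset V)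

lemma subset_closedNbhd : S ⊆ closedNbhd G S := Finset.subset_union_left

lemma subset_pdStep : A ⊆ pdStep G A := Finset.subset_union_left

lemma pdSeq_succ (k : ℕ) : pdSeq G S (k + 2) = pdStep G (pdSeq G S (k + 1)) := rfl

lemma pdSeq_mono_succ (i : ℕ) : pdSeq G S i ⊆ pdSeq G S (i + 1) := by
  match i with
  | 0 => simp [pdSeq]
  | (k + 1) => exact subset_pdStep G _

lemma pdSeq_mono {i j : ℕ} (h : i ≤ j) : pdSeq G S i ⊆ pdSeq G S j := by
  induction j with
  | zero => simpa using (Nat.le_zero.mp h) ▸ Finset.Subset.refl _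
  | succ j ih =>
    rcases Nat.lt_or_ge i (j+1) with h' | h'
    · exact (ih (Nat.lt_succ_iff.mp h')).trans (pdSeq_mono_succ G S j)
    · exact le_antisymm h h' ▸ Finset.Subset.refl _

lemma pdSeq_fix {k : ℕ} (h : pdSeq G S (k + 1) = pdSeq G S (k + 2)) (m : ℕ) :
    pdSeq G S (k + 1 + m) = pdSeq G S (k + 1) := by
  induction m with
  | zero => rfl
  | succ m ih =>
    have : k + 1 + (m + 1) = (k + m) + 2 := by ring
    rw [this, pdSeq_succ]
    have : k + m + 1 = k + 1 + m := by ring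
    rw [this, ih, ← pdSeq_succ]
    exact h.symm

lemma pdSeq_eventually_univ {S : Finset V} (hS : IsPDS G S) {k : ℕ}
    (h : pdSeq G S (k + 1) = pdSeq G S (k + 2)) : pdSeq G S (k + 1) = Finset.univ := by
  obtain ⟨j, hj⟩ := hS
  rcases Nat.le_total j (k + 1) with hle | hle
  · exact Finset.univ_subset_iff.mp (hj ▸ pdSeq_mono G S hle)
  · obtain ⟨m, rfl⟩ := Nat.exists_eq_add_of_le hle
    rw [pdSeq_fix G S h m] at hj; exact hj

lemma pdSeq_card_grow {S : Finset V} (hS : IsPDS G S) (hne : S.Nonempty) (i : ℕ) :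
    pdSeq G S (1 + i) = Finset.univ ∨ G.minDegree + 1 + i ≤ (pdSeq G S (1 + i)).card := by
  induction i with
  | zero =>
    right
    obtain ⟨v, hv⟩ := hne
    have hsub : insert v (G.neighborFinset v) ⊆ pdSeq G S 1 := by
      intro x hx
      rcases Finset.mem_insert.mp hx with rfl | hx
      · exact subset_closedNbhd G S hv
      · exact Finset.mem_union_right _ (Finset.mem_biUnion.mpr ⟨v, hv, hx⟩)
    have h1 : G.minDegree + 1 ≤ (insert v (G.neighborFinset v)).card := by
      rw [Finset.card_insert_of_notMem (G.notMem_neighborFinset_self v),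
        G.card_neighborFinset_eq_degree]
      exact Nat.add_le_add_right (G.minDegree_le_degree v) 1
    simpa using h1.trans (Finset.card_le_card hsub)
  | succ i ih =>
    rcases ih with h | h
    · left
      exact Finset.univ_subset_iff.mp (h ▸ pdSeq_mono G S (by omega))
    · by_cases hu : pdSeq G S (1 + i) = Finset.univ
      · left; exact Finset.univ_subset_iff.mp (hu ▸ pdSeq_mono G S (by omega))
      · right
        have hlt : (pdSeq G S (1 + i)).card < (pdSeq G S (1 + (i + 1))).card := by
          by_cases heq : pdSeq G S (1 + i) = pdSeq G S (1 + (i + 1))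
          · exfalso
            apply hu
            have h1 : 1 + i = i + 1 := by omega
            have h12 : 1 + (i + 1) = i + 2 := by omega
            rw [h1, h12] at heq
            rw [h1]
            exact pdSeq_eventually_univ G hS heq
          · exact Finset.card_lt_card (Finset.ssubset_iff_subset_ne.mpr
              ⟨pdSeq_mono G S (by omega), heq⟩)
        omega

lemma univ_isPDS : IsPDS G (Finset.univ : Finset V) :=
  ⟨1, Finset.univ_subset_iff.mp (subset_closedNbhd G _)⟩

end lemmas

lemma pdSeq_empty {V : Type*} [Fintype V] (G : SimpleGraph V) (i : ℕ) :
    pdSeq G (∅ : Finset V) i = ∅ := by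
  match i with
  | 0 => rfl
  | 1 => simp [pdSeq, closedNbhd]
  | (k + 2) =>
    rw [pdSeq, pdSeq_empty G (k + 1)]
    simp [pdStep, closedNbhd]

theorem stmt_1 {V : Type*} [Fintype V] [Nonempty V] (G : SimpleGraph V) (n : ℕ)
    (hn : Fintype.card V = n) :
    pdRad G ≤ n - G.minDegree := by
  have hδ : G.minDegree < n :=
    hn ▸ (G.minDegree_le_degree (Classical.arbitrary V)).trans_lt
      (G.degree_lt_card_verts (Classical.arbitrary V))
  have hne : {k | ∃ S : Finset V, IsPDS G S ∧ S.card = k}.Nonempty :=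
    ⟨(Finset.univ : Finset V).card, Finset.univ, univ_isPDS G, rfl⟩
  obtain ⟨S, hSpds, hScard⟩ := Nat.sInf_mem hne
  have hSne : S.Nonempty := by
    rcases Finset.eq_empty_or_nonempty S with rfl | h
    · obtain ⟨i, hi⟩ := hSpds
      rw [pdSeq_empty] at hi
      exact absurd (hi ▸ Finset.mem_univ (Classical.arbitrary V)) (by simp)
    · exact h
  have hfin : pdSeq G S (n - G.minDegree) = Finset.univ := by
    have h1 : 1 + (n - G.minDegree - 1) = n - G.minDegree := by omega
    rcases pdSeq_card_grow G hSpds hSne (n - G.minDegree - 1) with h | h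
    · rwa [h1] at h
    · rw [h1] at h
      apply Finset.eq_univ_of_card
      have hle : (pdSeq G S (n - G.minDegree)).card ≤ Fintype.card V :=
        Finset.card_le_univ _
      omega
  have h2 : pdRadS G S ≤ n - G.minDegree := Nat.sInf_le hfin
  exact le_trans (Nat.sInf_le ⟨S, hSpds, hScard, rfl⟩) h2
end

section
/- Let n be even and G = K_n − M, where M is a perfect matching of K_n. Then rad_p(G) = n - δ(G) = 2. -/
open scoped Classical

theorem stmt_3 {V : Type*} [Fintype V] [Nonempty V] (G : SimpleGraph V) (n : ℕ)
    (hn : Fintype.card V = n) (heven : Even n) (h4 : 4 ≤ n) (m : V → V)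
    (hfix : ∀ v, m v ≠ v) (hinv : ∀ v, m (m v) = v)
    (hadj : ∀ u v, G.Adj u v ↔ u ≠ v ∧ v ≠ m u) :
    pdRad G = n - G.minDegree ∧ pdRad G = 2 := by
  classical
  -- neighbor finsets
  have hnbr : ∀ v : V, G.neighborFinset v = Finset.univ \ {v, m v} := by
    intro v
    ext u
    simp only [SimpleGraph.mem_neighborFinset, hadj v u, Finset.mem_sdiff, Finset.mem_univ,
      Finset.mem_insert, Finset.mem_singleton, true_and, not_or]
    constructor
    · rintro ⟨h1, h2⟩; exact ⟨fun h => h1 h.symm, h2⟩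
    · rintro ⟨h1, h2⟩; exact ⟨fun h => h1 h.symm, h2⟩
  -- degrees
  have hdeg : ∀ v : V, G.degree v = n - 2 := by
    intro v
    rw [SimpleGraph.degree, hnbr v, Finset.card_sdiff_of_subset (Finset.subset_univ _),
      Finset.card_univ, hn]
    have : ({v, m v} : Finset V).card = 2 := by
      rw [Finset.card_insert_of_notMem (by simp [(hfix v).symm, Ne, eq_comm]),
        Finset.card_singleton]
    rw [this]
  have hmin : G.minDegree = n - 2 := by
    obtain ⟨v, hv⟩ := G.exists_minimal_degree_vertex
    rw [hv, hdeg]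
  -- closed neighborhood of a singleton
  have hcn : ∀ v : V, closedNbhd G {v} = Finset.univ \ {m v} := by
    intro v
    ext u
    simp only [closedNbhd, Finset.mem_union, Finset.singleton_biUnion, hnbr v,
      Finset.mem_sdiff, Finset.mem_univ, Finset.mem_insert, Finset.mem_singleton,
      true_and, not_or]
    constructor
    · rintro (h | ⟨h1, h2⟩)
      · subst h; exact fun hh => hfix u hh.symm
      · exact h2
    · intro h
      by_cases hu : u = v
      · exact Or.inl hu
      · exact Or.inr ⟨hu, h⟩
  -- step 2 reaches everything
  have hstep2 : ∀ v : V, pdSeq G ({v} : Finset V) 2 = Finset.univ := by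
    intro v
    have h1 : pdSeq G ({v} : Finset V) 1 = Finset.univ \ {m v} := hcn v
    have h2 : pdSeq G ({v} : Finset V) 2 = pdStep G (Finset.univ \ {m v}) := by
      show pdStep G (pdSeq G ({v} : Finset V) 1) = _
      rw [h1]
    rw [h2]
    -- pick u ≠ v, u ≠ m v
    have hcard : 2 ≤ (Finset.univ \ {v, m v} : Finset V).card := by
      rw [Finset.card_sdiff_of_subset (Finset.subset_univ _), Finset.card_univ, hn]
      have : ({v, m v} : Finset V).card ≤ 2 := Finset.card_insert_le _ _ |>.trans (by simp)
      omega
    obtain ⟨u, hu⟩ : (Finset.univ \ {v, m v} : Finset V).Nonempty :=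
      Finset.card_pos.mp (by omega)
    simp only [Finset.mem_sdiff, Finset.mem_univ, Finset.mem_insert, Finset.mem_singleton,
      true_and, not_or] at hu
    obtain ⟨huv, hum⟩ := hu
    apply Finset.eq_univ_of_forall
    intro w
    by_cases hw : w = m v
    · subst hw
      unfold pdStep
      apply Finset.mem_union_right
      unfold closedNbhd
      apply Finset.mem_union_right
      apply Finset.mem_biUnion.mpr
      refine ⟨u, ?_, ?_⟩
      · rw [Finset.mem_filter]
        constructor
        · simp [hum]
        · have hsub : G.neighborFinset u \ (Finset.univ \ {m v}) ⊆ {m v} := by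
            intro x hx
            simp only [Finset.mem_sdiff, Finset.mem_univ, true_and, not_not,
              Finset.mem_singleton] at hx ⊢
            tauto
          calc (G.neighborFinset u \ (Finset.univ \ {m v})).card ≤ ({m v} : Finset V).card :=
                Finset.card_le_card hsub
            _ = 1 := Finset.card_singleton _
      · rw [hnbr u]
        simp only [Finset.mem_sdiff, Finset.mem_univ, Finset.mem_insert, Finset.mem_singleton,
          true_and, not_or]
        refine ⟨fun h => hum h.symm, fun h => huv ?_⟩
        have := congrArg m h
        rwa [hinv, hinv, eq_comm] at this
    · unfold pdStep
      apply Finset.mem_union_left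
      simp [hw]
  have huniv_ne : (∅ : Finset V) ≠ Finset.univ := by
    intro h
    exact Finset.not_nonempty_empty (h ▸ Finset.univ_nonempty)
  have h1ne : ∀ v : V, pdSeq G ({v} : Finset V) 1 ≠ Finset.univ := by
    intro v h
    have : m v ∈ pdSeq G ({v} : Finset V) 1 := h ▸ Finset.mem_univ _
    rw [show pdSeq G ({v} : Finset V) 1 = closedNbhd G {v} from rfl, hcn v] at this
    simp at this
  -- empty set never power dominates
  have hemp : ∀ i, pdSeq G (∅ : Finset V) i = ∅ := by
    intro i
    induction i using Nat.strong_induction_on with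
    | _ i ih =>
      match i with
      | 0 => rfl
      | 1 => simp [pdSeq, closedNbhd]
      | (j+2) =>
        have := ih (j+1) (by omega)
        show pdStep G (pdSeq G (∅ : Finset V) (j+1)) = ∅
        rw [this]
        simp [pdStep, closedNbhd]
  -- pdNum = 1
  have hv0 : V := Classical.arbitrary V
  have hpds : ∀ v : V, IsPDS G ({v} : Finset V) := fun v => ⟨2, hstep2 v⟩
  have hnum : pdNum G = 1 := by
    have hmem : (1 : ℕ) ∈ {k | ∃ S : Finset V, IsPDS G S ∧ S.card = k} :=
      ⟨{hv0}, hpds hv0, Finset.card_singleton _⟩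
    have hzero : (0 : ℕ) ∉ {k | ∃ S : Finset V, IsPDS G S ∧ S.card = k} := by
      rintro ⟨S, hS, hc⟩
      rw [Finset.card_eq_zero] at hc
      subst hc
      obtain ⟨i, hi⟩ := hS
      exact huniv_ne ((hemp i) ▸ hi)
    have hself : pdNum G ∈ {k | ∃ S : Finset V, IsPDS G S ∧ S.card = k} :=
      Nat.sInf_mem ⟨1, hmem⟩
    have hne0 : pdNum G ≠ 0 := fun h => hzero (h ▸ hself)
    have hle : pdNum G ≤ 1 := Nat.sInf_le hmem
    omega
  -- pdRadS of singleton = 2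
  have hrads : ∀ v : V, pdRadS G ({v} : Finset V) = 2 := by
    intro v
    unfold pdRadS
    apply le_antisymm
    · exact Nat.sInf_le (show (2:ℕ) ∈ {i | pdSeq G ({v} : Finset V) i = Finset.univ} from hstep2 v)
    · apply le_csInf (⟨2, hstep2 v⟩ :
        Set.Nonempty {i | pdSeq G ({v} : Finset V) i = Finset.univ})
      intro b hb
      match b, hb with
      | 0, hb => exact absurd hb huniv_ne
      | 1, hb => exact absurd hb (h1ne v)
      | (k+2), _ => omega
  -- pdRad = 2
  have hrad : pdRad G = 2 := by
    unfold pdRad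
    apply le_antisymm
    · exact Nat.sInf_le (show (2:ℕ) ∈
          {r | ∃ S : Finset V, IsPDS G S ∧ S.card = pdNum G ∧ pdRadS G S = r} from
        ⟨{hv0}, hpds hv0, by rw [hnum, Finset.card_singleton], hrads hv0⟩)
    · apply le_csInf (⟨2, {hv0}, hpds hv0, by rw [hnum, Finset.card_singleton], hrads hv0⟩ :
        Set.Nonempty {r | ∃ S : Finset V, IsPDS G S ∧ S.card = pdNum G ∧ pdRadS G S = r})
      rintro r ⟨S, _, hScard, hr⟩
      rw [hnum, Finset.card_eq_one] at hScard
      obtain ⟨w, rfl⟩ := hScard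
      rw [hrads w] at hr
      omega
  refine ⟨?_, hrad⟩
  rw [hrad, hmin]
  omega
end

section
/- Let G be a graph, S a power dominating set of G, and let u, v be distinct vertices of G with N(u) \ {v} = N(v) \ {u}. Then N[S] ∩ {u, v} ≠ ∅. -/
open scoped Classical

theorem stmt_5 {V : Type*} [Fintype V] (G : SimpleGraph V) (S : Finset V)
    (hS : IsPDS G S) (u v : V) (huv : u ≠ v)
    (h : G.neighborFinset u \ {v} = G.neighborFinset v \ {u}) :
    (closedNbhd G S ∩ {u, v}).Nonempty := by
  by_contra hne
  rw [Finset.not_nonempty_iff_eq_empty, ← Finset.disjoint_iff_inter_eq_empty,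
    Finset.disjoint_right] at hne
  have hu1 : u ∉ closedNbhd G S := hne (by simp)
  have hv1 : v ∉ closedNbhd G S := hne (by simp)
  -- twin property: any common structure
  have twin : ∀ w : V, w ≠ v → G.Adj w u → G.Adj w v := by
    intro w hwv hadj
    have : w ∈ G.neighborFinset u \ {v} := by
      simp [hadj.symm, hwv]
    rw [h] at this
    simp only [Finset.mem_sdiff, SimpleGraph.mem_neighborFinset, Finset.mem_singleton] at this
    exact this.1.symm
  have twin' : ∀ w : V, w ≠ u → G.Adj w v → G.Adj w u := by
    intro w hwu hadj
    have : w ∈ G.neighborFinset v \ {u} := by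
      simp [hadj.symm, hwu]
    rw [← h] at this
    simp only [Finset.mem_sdiff, SimpleGraph.mem_neighborFinset, Finset.mem_singleton] at this
    exact this.1.symm
  -- invariant
  have key : ∀ i, u ∉ pdSeq G S i ∧ v ∉ pdSeq G S i := by
    intro i
    induction i with
    | zero => simp [pdSeq]
    | succ n ih =>
      match n, ih with
      | 0, _ => exact ⟨hu1, hv1⟩
      | (m+1), ih =>
        obtain ⟨ihu, ihv⟩ := ih
        set A := pdSeq G S (m+1) with hA
        have main : ∀ x y : V, x ∉ A → y ∉ A → x ≠ y →
            (∀ w : V, w ≠ y → G.Adj w x → G.Adj w y) → x ∉ pdStep G A := by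
          intro x y hx hy hxy htw hmem
          unfold pdStep closedNbhd at hmem
          simp only [Finset.mem_union, Finset.mem_biUnion, Finset.mem_filter,
            SimpleGraph.mem_neighborFinset] at hmem
          rcases hmem with hmem | ⟨hmem, _⟩ | ⟨w, ⟨hwA, hwc⟩, hwx⟩
          · exact hx hmem
          · exact hx hmem
          · have hwy : w ≠ y := fun e => hy (e ▸ hwA)
            have hadjy : G.Adj w y := htw w hwy hwx
            have hsub : ({x, y} : Finset V) ⊆ G.neighborFinset w \ A := by
              intro z hz
              simp only [Finset.mem_insert, Finset.mem_singleton] at hz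
              rcases hz with rfl | rfl
              · simp [SimpleGraph.mem_neighborFinset, hwx, hx]
              · simp [SimpleGraph.mem_neighborFinset, hadjy, hy]
            have h2 : 2 ≤ (G.neighborFinset w \ A).card := by
              have := Finset.card_le_card hsub
              rwa [Finset.card_insert_of_notMem (by simp [hxy]),
                Finset.card_singleton] at this
            omega
        have hu2 : u ∉ pdStep G A := main u v ihu ihv huv twin
        have hv2 : v ∉ pdStep G A := main v u ihv ihu huv.symm twin'
        exact ⟨hu2, hv2⟩
  obtain ⟨i, hi⟩ := hS
  have := (key i).1
  rw [hi] at this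
  exact this (Finset.mem_univ u)
end

section
/- Let G be a graph and S a zero forcing set of G with some complete forcing sequence. Then the reversal Z of S (the set of terminal vertices of all maximal forcing chains of that sequence) is also a zero forcing set of G. -/
open scoped Classical

/-- One step of zero forcing: every monitored vertex with exactly one
unmonitored neighbour forces it. -/
noncomputable def zfStep {V : Type*} [Fintype V] (G : SimpleGraph V) (A : Finset V) : Finset V :=
  A ∪ Finset.univ.filter fun u => ∃ v ∈ A, G.neighborFinset v \ A = {u}

/-- `S` is a zero forcing set of `G`. -/
def IsZFS {V : Type*} [Fintype V] (G : SimpleGraph V) (S : Finset V) : Prop :=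
  ∃ i, (zfStep G)^[i] S = Finset.univ

/-- `(v, u)` is a valid force from the monitored set `A`: the monitored vertex `v`
has `u` as its unique unmonitored neighbour. -/
def ValidForce {V : Type*} [Fintype V] (G : SimpleGraph V) (A : Finset V) (p : V × V) : Prop :=
  p.1 ∈ A ∧ G.neighborFinset p.1 \ A = {p.2}

/-- `T` is a complete (chronological) forcing sequence from the monitored set `A`:
each listed force is valid at its turn, and at the end all vertices are monitored. -/
def ValidSeq {V : Type*} [Fintype V] (G : SimpleGraph V) : Finset V → List (V × V) → Prop
  | A, [] => A = Finset.univ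
  | A, p :: rest => ValidForce G A p ∧ ValidSeq G (insert p.2 A) rest

/-!
Undo the forces in reverse order with the roles swapped, starting from the vertices that never
force. When `v` forces `u`, every neighbour of `v` other than `u` is already monitored and `u` is
not; hence `v` never forces again, and no vertex forced later equals or neighbours `v`. So when,
going backwards, `u` is to force `v`, the unmonitored vertices are the forcers up to and
including `v`, and `v` is the only one of them adjacent to `u`.
-/

open Finset

namespace ValidForce

variable {V : Type*} [Fintype V] {G : SimpleGraph V} {A : Finset V} {p : V × V}

lemma mem_neighborFinset_sdiff (hp : ValidForce G A p) : p.2 ∈ G.neighborFinset p.1 \ A :=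
  hp.2 ▸ mem_singleton_self _

lemma adj (hp : ValidForce G A p) : G.Adj p.1 p.2 :=
  (G.mem_neighborFinset _ _).1 (mem_sdiff.1 hp.mem_neighborFinset_sdiff).1

lemma snd_notMem (hp : ValidForce G A p) : p.2 ∉ A :=
  (mem_sdiff.1 hp.mem_neighborFinset_sdiff).2

lemma neighborFinset_subset_insert (hp : ValidForce G A p) :
    G.neighborFinset p.1 ⊆ insert p.2 A := by
  rw [insert_eq]
  exact sdiff_le_iff'.1 hp.2.le

lemma insert_subset_zfStep (hp : ValidForce G A p) : insert p.2 A ⊆ zfStep G A :=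
  insert_subset (mem_union_right _ (mem_filter.2 ⟨mem_univ _, p.1, hp.1, hp.2⟩))
    subset_union_left

lemma erase {a : V} (hp : ValidForce G A p) (ha : a ≠ p.1) (hadj : ¬ G.Adj p.1 a) :
    ValidForce G (A.erase a) p := by
  refine ⟨mem_erase.2 ⟨ha.symm, hp.1⟩, ?_⟩
  rw [← hp.2]
  ext y
  by_cases hy : y = a
  · subst hy; simp [hadj]
  · simp [hy]

end ValidForce

section ZeroForcing

variable {V : Type*} [Fintype V] {G : SimpleGraph V}

lemma zfStep_mono {A B : Finset V} (h : A ⊆ B) : zfStep G A ⊆ zfStep G B := by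
  intro x hx
  by_cases hxB : x ∈ B
  · exact mem_union_left _ hxB
  rcases mem_union.1 hx with hxA | hx
  · exact absurd (h hxA) hxB
  obtain ⟨-, v, hvA, hv⟩ := mem_filter.1 hx
  refine mem_union_right _ (mem_filter.2 ⟨mem_univ _, v, h hvA, ?_⟩)
  refine eq_singleton_iff_unique_mem.2 ⟨?_, fun y hy => ?_⟩
  · exact mem_sdiff.2 ⟨(mem_sdiff.1 (hv ▸ mem_singleton_self x)).1, hxB⟩
  · exact mem_singleton.1 (hv ▸ sdiff_subset_sdiff subset_rfl h hy)

lemma zfStep_iterate_mono (n : ℕ) {A B : Finset V} (h : A ⊆ B) :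
    (zfStep G)^[n] A ⊆ (zfStep G)^[n] B := by
  induction n generalizing A B with
  | zero => exact h
  | succ n ih => exact ih (zfStep_mono h)

end ZeroForcing

namespace ValidSeq

variable {V : Type*} [Fintype V] {G : SimpleGraph V}

lemma isZFS {A : Finset V} {L : List (V × V)} (hL : ValidSeq G A L) : IsZFS G A := by
  induction L generalizing A with
  | nil => exact ⟨0, hL⟩
  | cons p rest ih =>
    obtain ⟨i, hi⟩ := ih hL.2
    refine ⟨i + 1, univ_subset_iff.1 ?_⟩
    rw [← hi, Function.iterate_succ_apply]
    exact zfStep_iterate_mono i hL.1.insert_subset_zfStep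

lemma snd_notMem {A : Finset V} {L : List (V × V)} (hL : ValidSeq G A L) :
    ∀ q ∈ L, q.2 ∉ A := by
  induction L generalizing A with
  | nil => simp
  | cons p rest ih =>
    intro q hq
    rcases List.mem_cons.1 hq with rfl | hq
    · exact hL.1.snd_notMem
    · exact fun hqA => ih hL.2 q hq (mem_insert_of_mem hqA)

lemma notMem_map_fst_of_neighborFinset_subset {A : Finset V} {L : List (V × V)}
    (hL : ValidSeq G A L) {v : V} (hv : G.neighborFinset v ⊆ A) : v ∉ L.map Prod.fst := by
  induction L generalizing A with
  | nil => simp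
  | cons p rest ih =>
    rintro (_ | ⟨_, hmem⟩)
    · exact hL.1.snd_notMem (hv ((G.mem_neighborFinset _ _).2 hL.1.adj))
    · exact ih hL.2 (hv.trans (subset_insert _ _)) hmem

lemma erase_append {B : Finset V} {L : List (V × V)} (hL : ValidSeq G B L) {z w : V}
    (hw : w ∈ B) (hzw : G.Adj z w) (hfar : ∀ q ∈ L, q.1 ∉ insert w (G.neighborFinset w)) :
    ValidSeq G (B.erase w) (L ++ [(z, w)]) := by
  induction L generalizing B with
  | nil =>
    have hB : B = univ := hL
    subst hB
    refine ⟨⟨mem_erase.2 ⟨hzw.ne, mem_univ _⟩, ?_⟩, insert_erase (mem_univ w)⟩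
    ext y
    by_cases hy : y = w
    · subst hy; simp [hzw]
    · simp [hy]
  | cons q rest ih =>
    have hq := hfar q List.mem_cons_self
    rw [mem_insert, not_or, SimpleGraph.mem_neighborFinset] at hq
    have hqw : q.2 ≠ w := fun h => hq.2 (h ▸ hL.1.adj).symm
    refine ⟨hL.1.erase (Ne.symm hq.1) (fun h => hq.2 h.symm), ?_⟩
    rw [← erase_insert_of_ne hqw]
    exact ih hL.2 (mem_insert_of_mem hw) fun r hr => hfar r (List.mem_cons_of_mem _ hr)

lemma reverse {A : Finset V} {L : List (V × V)} (hL : ValidSeq G A L) :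
    ValidSeq G (univ \ (L.map Prod.fst).toFinset) (L.map Prod.swap).reverse := by
  induction L generalizing A with
  | nil => exact sdiff_empty
  | cons p rest ih =>
    have hnbhd : insert p.1 (G.neighborFinset p.1) ⊆ insert p.2 A :=
      insert_subset (mem_insert_of_mem hL.1.1) hL.1.neighborFinset_subset_insert
    have hp : p.1 ∉ (rest.map Prod.fst).toFinset := by
      rw [List.mem_toFinset]
      exact hL.2.notMem_map_fst_of_neighborFinset_subset hL.1.neighborFinset_subset_insert
    rw [List.map_cons, List.toFinset_cons, sdiff_insert, List.map_cons, List.reverse_cons]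
    refine (ih hL.2).erase_append (mem_sdiff.2 ⟨mem_univ _, hp⟩) hL.1.adj.symm ?_
    simp only [List.mem_reverse, List.mem_map, Prod.exists, Prod.swap_prod_mk]
    rintro _ ⟨x, y, hxy, rfl⟩
    exact fun h => hL.2.snd_notMem (x, y) hxy (hnbhd h)

end ValidSeq

/-- The reversal of `S` with respect to the forcing sequence `T`: the set of terminal
vertices of the maximal forcing chains, i.e. the vertices that never force. -/
theorem stmt_6 {V : Type*} [Fintype V] (G : SimpleGraph V) (S : Finset V)
    (T : List (V × V)) (hT : ValidSeq G S T) :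
    IsZFS G (Finset.univ \ (T.map Prod.fst).toFinset) :=
  hT.reverse.isZFS
end

section
/- Let G and H be graphs with no isolated vertices such that γ_p(G) ≥ 2 and γ_p(H) ≥ 2. Then the join G + H satisfies γ_p(G + H) = 2 and rad_p(G + H) = 1. -/
open scoped Classical

/-- The join `G + H` of two graphs on disjoint vertex sets: all edges of `G` and `H`,
together with every edge between the two sides. -/
def graphJoin {V W : Type*} (G : SimpleGraph V) (H : SimpleGraph W) :
    SimpleGraph (V ⊕ W) where
  Adj x y :=
    Sum.elim (fun a => Sum.elim (fun b => G.Adj a b) (fun _ => True) y)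
      (fun a => Sum.elim (fun _ => True) (fun b => H.Adj a b) y) x
  symm := by
    refine ⟨?_⟩
    rintro (a | a) (b | b) h <;> simp only [Sum.elim_inl, Sum.elim_inr] at h ⊢
    · exact G.adj_symm h
    · exact H.adj_symm h
  loopless := by
    refine ⟨?_⟩
    rintro (a | a) h <;> simp only [Sum.elim_inl, Sum.elim_inr] at h
    · exact G.irrefl h
    · exact H.irrefl h

/-! A vertex of each side dominates `G + H` in one step, so `γ_p(G + H) ≤ 2` and `rad_p = 1`.
Conversely, a set of at most one vertex lies inside one side, say `G`, and powers `G + H` no better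
than it powers `G`: a vertex of `H` is adjacent to all of `G`, so it cannot force while two
vertices of `G` are unobserved, and vertices of `G` force within `G` as they would in `G` alone.
Since `γ_p(G) ≥ 2` and `G` has no isolated vertices, two vertices of `G` stay unobserved forever. -/

open Finset

section PowerDomination

variable {V : Type*} [Fintype V] {G : SimpleGraph V} {S A : Finset V}

lemma mem_closedNbhd {x : V} : x ∈ closedNbhd G S ↔ x ∈ S ∨ ∃ v ∈ S, G.Adj v x := by
  simp [closedNbhd]

lemma mem_pdStep {x : V} :
    x ∈ pdStep G A ↔
      x ∈ A ∨ ∃ v ∈ A, (G.neighborFinset v \ A).card ≤ 1 ∧ (x = v ∨ G.Adj v x) := by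
  simp only [pdStep, mem_union, mem_closedNbhd, mem_filter]
  aesop

lemma pdStep_eq_univ (hG : ∀ v, ∃ u, G.Adj v u) (h : (univ \ A).card ≤ 1) :
    pdStep G A = univ := by
  refine eq_univ_of_forall fun y => mem_pdStep.mpr ?_
  by_cases hy : y ∈ A
  · exact Or.inl hy
  obtain ⟨u, hyu⟩ := hG y
  have huA : u ∈ A := by
    by_contra huA
    exact G.ne_of_adj hyu (card_le_one.mp h y (by simp [hy]) u (by simp [huA]))
  have hcard : (G.neighborFinset u \ A).card ≤ 1 :=
    (card_le_card (sdiff_subset_sdiff (subset_univ _) le_rfl)).trans h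
  exact Or.inr ⟨u, huA, hcard, Or.inr hyu.symm⟩

lemma two_le_card_compl_pdSeq (hG : ∀ v, ∃ u, G.Adj v u) (hS : ¬ IsPDS G S) (i : ℕ) :
    2 ≤ (univ \ pdSeq G S (i + 1)).card := by
  by_contra! h
  exact hS ⟨i + 2, pdStep_eq_univ hG (by omega)⟩

lemma not_isPDS_of_card_lt_pdNum (h : S.card < pdNum G) : ¬ IsPDS G S :=
  fun hS => h.not_ge (Nat.sInf_le ⟨S, hS, rfl⟩)

lemma nonempty_of_pdNum_ne_zero (h : pdNum G ≠ 0) : Nonempty V := by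
  by_contra hV
  have : IsEmpty V := not_nonempty_iff.mp hV
  exact h (Nat.eq_zero_of_le_zero (Nat.sInf_le ⟨∅, ⟨0, (univ_eq_empty).symm⟩, card_empty⟩))

lemma pdNum_eq {k : ℕ} (hS : IsPDS G S) (hcard : S.card = k)
    (hmin : ∀ T, IsPDS G T → k ≤ T.card) : pdNum G = k :=
  le_antisymm (Nat.sInf_le ⟨S, hS, hcard⟩)
    (le_csInf ⟨k, S, hS, hcard⟩ fun _ ⟨T, hT, hTk⟩ => hTk ▸ hmin T hT)

lemma one_le_pdRadS [Nonempty V] (hS : IsPDS G S) : 1 ≤ pdRadS G S :=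
  le_csInf hS fun i hi => Nat.one_le_iff_ne_zero.mpr <| by
    rintro rfl
    exact univ_nonempty.ne_empty hi.symm

lemma pdRad_eq_one [Nonempty V] (hcard : S.card = pdNum G) (h1 : pdSeq G S 1 = univ) :
    pdRad G = 1 := by
  have hrad : pdRadS G S = 1 := le_antisymm (Nat.sInf_le h1) (one_le_pdRadS ⟨1, h1⟩)
  exact le_antisymm (Nat.sInf_le ⟨S, ⟨1, h1⟩, hcard, hrad⟩)
    (le_csInf ⟨1, S, ⟨1, h1⟩, hcard, hrad⟩ fun _ ⟨T, hT, _, hr⟩ => hr ▸ one_le_pdRadS hT)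

end PowerDomination

section Embedding

variable {V U : Type*} [Fintype V] [Fintype U] {G : SimpleGraph V} {J : SimpleGraph U}
  (e : G ↪g J)

/-- A vertex outside `G` sees every unobserved vertex of `G`, so it cannot force while there are
two of them. -/
lemma map_notMem_pdStep (hdom : ∀ u, u ∉ Set.range e → ∀ a, J.Adj u (e a))
    {A : Finset U} {B : Finset V} (hB : 2 ≤ (univ \ B).card)
    (hAB : ∀ b ∉ B, e b ∉ A) {a : V} (ha : a ∉ pdStep G B) : e a ∉ pdStep J A := by
  rw [mem_pdStep, not_or] at ha
  rw [mem_pdStep]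
  rintro (haA | ⟨u, huA, hcard, hau⟩)
  · exact hAB a ha.1 haA
  by_cases hu : u ∈ Set.range e
  · obtain ⟨c, rfl⟩ := hu
    have hcB : c ∈ B := by_contra fun hcB => hAB c hcB huA
    have hmap : (G.neighborFinset c \ B).map e.toEmbedding ⊆ J.neighborFinset (e c) \ A := by
      intro x hx
      obtain ⟨b, hb, rfl⟩ := mem_map.mp hx
      rw [mem_sdiff, SimpleGraph.mem_neighborFinset] at hb ⊢
      exact ⟨e.map_rel_iff.mpr hb.1, hAB b hb.2⟩
    refine ha.2 ⟨c, hcB, (card_map _ ▸ card_le_card hmap).trans hcard, ?_⟩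
    rcases hau with h | h
    · exact Or.inl (e.injective h)
    · exact Or.inr (e.map_rel_iff.mp h)
  · have hmap : (univ \ B).map e.toEmbedding ⊆ J.neighborFinset u \ A := by
      intro x hx
      obtain ⟨b, hb, rfl⟩ := mem_map.mp hx
      rw [mem_sdiff, SimpleGraph.mem_neighborFinset]
      exact ⟨hdom u hu b, hAB b (mem_sdiff.mp hb).2⟩
    have := card_le_card hmap
    rw [card_map] at this
    omega

lemma map_notMem_pdSeq (hdom : ∀ u, u ∉ Set.range e → ∀ a, J.Adj u (e a))
    (hG : ∀ v, ∃ u, G.Adj v u) {S : Finset V} (hS : ¬ IsPDS G S) :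
    ∀ i, ∀ a ∉ pdSeq G S (i + 1), e a ∉ pdSeq J (S.map e.toEmbedding) (i + 1)
  | 0, a, ha, h => by
    rcases mem_closedNbhd.mp h with h | ⟨_, hv, hva⟩
    · obtain ⟨b, hb, hba⟩ := mem_map.mp h
      exact ha (mem_closedNbhd.mpr (Or.inl (e.injective hba ▸ hb)))
    · obtain ⟨c, hc, rfl⟩ := mem_map.mp hv
      exact ha (mem_closedNbhd.mpr (Or.inr ⟨c, hc, e.map_rel_iff.mp hva⟩))
  | i + 1, a, ha, h =>
    map_notMem_pdStep e hdom (two_le_card_compl_pdSeq hG hS i)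
      (map_notMem_pdSeq hdom hG hS i) ha h

lemma not_isPDS_map (hdom : ∀ u, u ∉ Set.range e → ∀ a, J.Adj u (e a))
    (hG : ∀ v, ∃ u, G.Adj v u) {S : Finset V} (hS : ¬ IsPDS G S) :
    ¬ IsPDS J (S.map e.toEmbedding) := by
  rintro ⟨_ | i, hi⟩
  · exact hS ⟨0, eq_univ_of_forall fun a => absurd (hi ▸ mem_univ (e a)) (notMem_empty _)⟩
  · refine hS ⟨i + 1, eq_univ_of_forall fun a => ?_⟩
    by_contra ha
    exact map_notMem_pdSeq e hdom hG hS i a ha (hi ▸ mem_univ _)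

end Embedding

section Join

variable {V W : Type*} {G : SimpleGraph V} {H : SimpleGraph W}

def joinInl : G ↪g graphJoin G H := ⟨⟨Sum.inl, Sum.inl_injective⟩, Iff.rfl⟩

def joinInr : H ↪g graphJoin G H := ⟨⟨Sum.inr, Sum.inr_injective⟩, Iff.rfl⟩

lemma joinInl_adj_of_notMem_range :
    ∀ u, u ∉ Set.range (joinInl (G := G) (H := H)) →
      ∀ a, (graphJoin G H).Adj u ((joinInl : G ↪g graphJoin G H) a)
  | Sum.inl b, hu, _ => absurd ⟨b, rfl⟩ hu
  | Sum.inr _, _, _ => trivial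

lemma joinInr_adj_of_notMem_range :
    ∀ u, u ∉ Set.range (joinInr (G := G) (H := H)) →
      ∀ a, (graphJoin G H).Adj u ((joinInr : H ↪g graphJoin G H) a)
  | Sum.inl _, _, _ => trivial
  | Sum.inr b, hu, _ => absurd ⟨b, rfl⟩ hu

variable [Fintype V] [Fintype W]

lemma closedNbhd_join_pair (v : V) (w : W) :
    closedNbhd (graphJoin G H) {Sum.inl v, Sum.inr w} = univ :=
  eq_univ_of_forall fun
    | Sum.inl _ => mem_closedNbhd.mpr (Or.inr ⟨Sum.inr w, by simp, trivial⟩)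
    | Sum.inr _ => mem_closedNbhd.mpr (Or.inr ⟨Sum.inl v, by simp, trivial⟩)

lemma two_le_card_of_isPDS_join (hG : ∀ v, ∃ u, G.Adj v u) (hH : ∀ v, ∃ u, H.Adj v u)
    (hgG : 2 ≤ pdNum G) (hgH : 2 ≤ pdNum H) {T : Finset (V ⊕ W)}
    (hT : IsPDS (graphJoin G H) T) : 2 ≤ T.card := by
  have hL {S : Finset V} (hS : S.card ≤ 1) : ¬ IsPDS (graphJoin G H) (S.map joinInl.toEmbedding) :=
    not_isPDS_map joinInl joinInl_adj_of_notMem_range hG (not_isPDS_of_card_lt_pdNum (by omega))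
  have hR {S : Finset W} (hS : S.card ≤ 1) : ¬ IsPDS (graphJoin G H) (S.map joinInr.toEmbedding) :=
    not_isPDS_map joinInr joinInr_adj_of_notMem_range hH (not_isPDS_of_card_lt_pdNum (by omega))
  by_contra! hcard
  obtain h0 | h1 : T.card = 0 ∨ T.card = 1 := by omega
  · exact hL (S := ∅) (by simp) (by simpa [card_eq_zero.mp h0] using hT)
  · obtain ⟨a | b, rfl⟩ := card_eq_one.mp h1
    · exact hL (S := {a}) (by simp) (by simpa [joinInl] using hT)
    · exact hR (S := {b}) (by simp) (by simpa [joinInr] using hT)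

end Join

theorem stmt_13 {V W : Type*} [Fintype V] [Fintype W]
    (G : SimpleGraph V) (H : SimpleGraph W)
    (hG : ∀ v : V, ∃ u, G.Adj v u) (hH : ∀ v : W, ∃ u, H.Adj v u)
    (hgG : 2 ≤ pdNum G) (hgH : 2 ≤ pdNum H) :
    pdNum (graphJoin G H) = 2 ∧ pdRad (graphJoin G H) = 1 := by
  obtain ⟨v⟩ := nonempty_of_pdNum_ne_zero (G := G) (by omega)
  obtain ⟨w⟩ := nonempty_of_pdNum_ne_zero (G := H) (by omega)
  have : Nonempty (V ⊕ W) := ⟨Sum.inl v⟩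
  have h1 : pdSeq (graphJoin G H) {Sum.inl v, Sum.inr w} 1 = univ := closedNbhd_join_pair v w
  have hcard : ({Sum.inl v, Sum.inr w} : Finset (V ⊕ W)).card = 2 := card_pair Sum.inl_ne_inr
  have hnum : pdNum (graphJoin G H) = 2 :=
    pdNum_eq ⟨1, h1⟩ hcard fun _ hT => two_le_card_of_isPDS_join hG hH hgG hgH hT
  exact ⟨hnum, pdRad_eq_one (hcard.trans hnum.symm) h1⟩
end

section
/- Let G be a graph and let u, v be vertices of G. If u ≠ v, N(u) \ {v} = N(v) \ {u}, and neither u nor v is isolated in G, then V(G) \ {u, v} is not a zero forcing set of G. -/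
open scoped Classical

theorem stmt_14 {V : Type*} [Fintype V] (G : SimpleGraph V) (u v : V) (huv : u ≠ v)
    (h : G.neighborFinset u \ {v} = G.neighborFinset v \ {u})
    (hu : ∃ w, G.Adj u w) (hv : ∃ w, G.Adj v w) :
    ¬ IsZFS G (Finset.univ \ {u, v}) := by
  set A : Finset V := Finset.univ \ {u, v} with hA
  have huA : u ∉ A := by simp [hA]
  have hvA : v ∉ A := by simp [hA]
  have hfix : zfStep G A = A := by
    apply Finset.Subset.antisymm
    · intro x hx
      rcases Finset.mem_union.mp hx with hx | hx
      · exact hx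
      · exfalso
        obtain ⟨w, hwA, hw⟩ := (Finset.mem_filter.mp hx).2
        have hxw : x ∈ G.neighborFinset w \ A := by rw [hw]; exact Finset.mem_singleton_self x
        have hxA : x ∉ A := (Finset.mem_sdiff.mp hxw).2
        have hxuv : x = u ∨ x = v := by
          by_contra hc
          push_neg at hc
          exact hxA (by simp [hA, hc.1, hc.2])
        have hadj : G.Adj w x := by
          have := (Finset.mem_sdiff.mp hxw).1
          rwa [SimpleGraph.mem_neighborFinset] at this
        rcases hxuv with rfl | rfl
        · -- x = u; then w ∈ N(u) \ {v}, so w ∈ N(v) \ {u}, so v ∈ N(w) \ A = {u}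
          have hwv : w ≠ v := fun e => hvA (e ▸ hwA)
          have hwmem : w ∈ G.neighborFinset x \ {v} := by
            simp [SimpleGraph.mem_neighborFinset, hadj.symm, hwv]
          rw [h] at hwmem
          have : v ∈ G.neighborFinset w \ A := by
            simp only [Finset.mem_sdiff, Finset.mem_singleton, SimpleGraph.mem_neighborFinset] at hwmem ⊢
            exact ⟨hwmem.1.symm, hvA⟩
          rw [hw] at this
          exact huv (Finset.mem_singleton.mp this).symm
        · -- x = v
          have hwu : w ≠ u := fun e => huA (e ▸ hwA)
          have hwmem : w ∈ G.neighborFinset x \ {u} := by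
            simp [SimpleGraph.mem_neighborFinset, hadj.symm, hwu]
          rw [← h] at hwmem
          have : u ∈ G.neighborFinset w \ A := by
            simp only [Finset.mem_sdiff, Finset.mem_singleton, SimpleGraph.mem_neighborFinset] at hwmem ⊢
            exact ⟨hwmem.1.symm, huA⟩
          rw [hw] at this
          exact huv (Finset.mem_singleton.mp this)
    · exact Finset.subset_union_left
  rintro ⟨i, hi⟩
  have : (zfStep G)^[i] A = A := Function.iterate_fixed hfix i
  rw [this] at hi
  exact huA (hi ▸ Finset.mem_univ u)
end

section
/- Let G be a connected graph of order n with maximum degree Δ and power domination number γ_p. Then rad_p(G) ≥ (n − γ_p)/(γ_p · Δ). -/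
open scoped Classical

/-!
After the domination step, propagation is zero forcing from `N[S]`. Count the *boundary* of an
observed set: its vertices that still have an unobserved neighbour. A propagation step observes
at most one new vertex per boundary vertex with at most one unobserved neighbour; those vertices
leave the boundary and only the newly observed vertices can join it, so the boundary never grows.
It starts with at most `|S| Δ` vertices, because vertices of `S` have all their neighbours in
`N[S]`. Hence `|P^i(S)| ≤ |S| + i |S| Δ`, and `P^r(S) = V` for a minimum power dominating set `S`
with `r = rad_p(G)` gives `n ≤ γ_p + rad_p(G) γ_p Δ`.
-/

namespace SimpleGraph

variable {V : Type*} [Fintype V] (G : SimpleGraph V)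

lemma card_biUnion_neighborFinset_le (S : Finset V) :
    (S.biUnion fun v => G.neighborFinset v).card ≤ S.card * G.maxDegree :=
  calc (S.biUnion fun v => G.neighborFinset v).card ≤ ∑ v ∈ S, (G.neighborFinset v).card :=
        Finset.card_biUnion_le
    _ ≤ S.card * G.maxDegree := Finset.sum_le_card_nsmul _ _ _ fun v _ => by
        simpa using G.degree_le_maxDegree v

lemma card_closedNbhd_le (S : Finset V) :
    (closedNbhd G S).card ≤ S.card + S.card * G.maxDegree :=
  (Finset.card_union_le _ _).trans (Nat.add_le_add_left (G.card_biUnion_neighborFinset_le S) _)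

noncomputable def pdBoundary (A : Finset V) : Finset V :=
  A.filter fun v => (G.neighborFinset v \ A).Nonempty

lemma sdiff_pdStep_subset (A : Finset V) :
    pdStep G A \ A ⊆ ((G.pdBoundary A).filter fun v => (G.neighborFinset v \ A).card ≤ 1).biUnion
      fun v => G.neighborFinset v \ A := by
  intro w hw
  simp only [pdStep, closedNbhd, Finset.mem_sdiff, Finset.mem_union, Finset.mem_filter,
    Finset.mem_biUnion] at hw ⊢
  obtain ⟨hwA | ⟨hwA, -⟩ | ⟨v, ⟨hvA, hv⟩, hvw⟩, hwA'⟩ := hw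
  · exact absurd hwA hwA'
  · exact absurd hwA hwA'
  · exact ⟨v, ⟨Finset.mem_filter.2 ⟨hvA, w, Finset.mem_sdiff.2 ⟨hvw, hwA'⟩⟩, hv⟩, hvw, hwA'⟩

lemma card_sdiff_pdStep_le (A : Finset V) :
    (pdStep G A \ A).card ≤
      ((G.pdBoundary A).filter fun v => (G.neighborFinset v \ A).card ≤ 1).card :=
  calc (pdStep G A \ A).card ≤ ∑ v ∈ (G.pdBoundary A).filter
          (fun v => (G.neighborFinset v \ A).card ≤ 1), (G.neighborFinset v \ A).card :=
        (Finset.card_le_card (G.sdiff_pdStep_subset A)).trans Finset.card_biUnion_le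
    _ ≤ ((G.pdBoundary A).filter fun v => (G.neighborFinset v \ A).card ≤ 1).card • 1 :=
        Finset.sum_le_card_nsmul _ _ _ fun v hv => (Finset.mem_filter.1 hv).2
    _ = _ := by rw [smul_eq_mul, mul_one]

lemma subset_pdStep (A : Finset V) : A ⊆ pdStep G A := Finset.subset_union_left

lemma pdBoundary_pdStep_subset (A : Finset V) :
    G.pdBoundary (pdStep G A) ⊆
      ((G.pdBoundary A).filter fun v => ¬(G.neighborFinset v \ A).card ≤ 1) ∪ (pdStep G A \ A) := by
  intro v hv
  obtain ⟨hvStep, u, hu⟩ := Finset.mem_filter.1 hv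
  obtain ⟨huv, huStep⟩ := Finset.mem_sdiff.1 hu
  by_cases hvA : v ∈ A
  · have huA : u ∉ A := fun h => huStep (G.subset_pdStep A h)
    refine Finset.mem_union_left _ (Finset.mem_filter.2 ⟨Finset.mem_filter.2
      ⟨hvA, u, Finset.mem_sdiff.2 ⟨huv, huA⟩⟩, fun hle => huStep ?_⟩)
    exact Finset.mem_union_right _ (Finset.mem_union_right _
      (Finset.mem_biUnion.2 ⟨v, Finset.mem_filter.2 ⟨hvA, hle⟩, huv⟩))
  · exact Finset.mem_union_right _ (Finset.mem_sdiff.2 ⟨hvStep, hvA⟩)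

lemma card_pdBoundary_pdStep_le (A : Finset V) :
    (G.pdBoundary (pdStep G A)).card ≤ (G.pdBoundary A).card :=
  calc (G.pdBoundary (pdStep G A)).card
      ≤ ((G.pdBoundary A).filter fun v => ¬(G.neighborFinset v \ A).card ≤ 1).card
        + (pdStep G A \ A).card :=
        (Finset.card_le_card (G.pdBoundary_pdStep_subset A)).trans (Finset.card_union_le _ _)
    _ ≤ ((G.pdBoundary A).filter fun v => ¬(G.neighborFinset v \ A).card ≤ 1).card
        + ((G.pdBoundary A).filter fun v => (G.neighborFinset v \ A).card ≤ 1).card :=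
        Nat.add_le_add_left (G.card_sdiff_pdStep_le A) _
    _ = (G.pdBoundary A).card := by
        rw [add_comm, Finset.card_filter_add_card_filter_not]

lemma pdBoundary_closedNbhd_subset (S : Finset V) :
    G.pdBoundary (closedNbhd G S) ⊆ S.biUnion fun v => G.neighborFinset v := by
  intro v hv
  obtain ⟨hv, u, hu⟩ := Finset.mem_filter.1 hv
  refine (Finset.mem_union.1 hv).resolve_left fun hvS => (Finset.mem_sdiff.1 hu).2 ?_
  exact Finset.mem_union_right _ (Finset.mem_biUnion.2 ⟨v, hvS, (Finset.mem_sdiff.1 hu).1⟩)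

lemma card_pdBoundary_pdSeq_le (S : Finset V) :
    ∀ i, (G.pdBoundary (pdSeq G S i)).card ≤ S.card * G.maxDegree
  | 0 => by simp [pdSeq, pdBoundary]
  | 1 => (Finset.card_le_card (G.pdBoundary_closedNbhd_subset S)).trans
      (G.card_biUnion_neighborFinset_le S)
  | i + 2 => (G.card_pdBoundary_pdStep_le _).trans (card_pdBoundary_pdSeq_le S (i + 1))

lemma card_pdSeq_le (S : Finset V) :
    ∀ i, (pdSeq G S i).card ≤ S.card + i * (S.card * G.maxDegree)
  | 0 => by simp [pdSeq]
  | 1 => by simpa [pdSeq] using G.card_closedNbhd_le S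
  | i + 2 => by
      have hstep : (pdStep G (pdSeq G S (i + 1)) \ pdSeq G S (i + 1)).card ≤
          S.card * G.maxDegree :=
        (G.card_sdiff_pdStep_le _).trans <| (Finset.card_filter_le _ _).trans <|
          G.card_pdBoundary_pdSeq_le S (i + 1)
      have := Finset.card_sdiff_add_card_eq_card (G.subset_pdStep (pdSeq G S (i + 1)))
      have := card_pdSeq_le S (i + 1)
      show (pdStep G (pdSeq G S (i + 1))).card ≤ _
      linarith

lemma exists_card_eq_pdNum_pdSeq_pdRad_eq_univ :
    ∃ S : Finset V, S.card = pdNum G ∧ pdSeq G S (pdRad G) = Finset.univ := by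
  have huniv : IsPDS G Finset.univ := ⟨1, Finset.eq_univ_of_forall fun v =>
    Finset.mem_union_left _ (Finset.mem_univ v)⟩
  obtain ⟨S₀, hS₀, hcard₀⟩ := Nat.sInf_mem (s := {k | ∃ S : Finset V, IsPDS G S ∧ S.card = k})
    ⟨_, _, huniv, rfl⟩
  obtain ⟨S, hS, hcard, hrad⟩ := Nat.sInf_mem
    (s := {r | ∃ S : Finset V, IsPDS G S ∧ S.card = pdNum G ∧ pdRadS G S = r})
    ⟨_, S₀, hS₀, hcard₀, rfl⟩
  exact ⟨S, hcard, (show pdRad G = pdRadS G S from hrad.symm) ▸ Nat.sInf_mem hS⟩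

end SimpleGraph

theorem stmt_19_general {V : Type*} [Fintype V] (G : SimpleGraph V) (n : ℕ)
    (hn : Fintype.card V = n) :
    ((n : ℝ) - (pdNum G : ℝ)) / ((pdNum G : ℝ) * (G.maxDegree : ℝ)) ≤ (pdRad G : ℝ) := by
  obtain ⟨S, hcard, huniv⟩ := G.exists_card_eq_pdNum_pdSeq_pdRad_eq_univ
  have hbound : n ≤ pdNum G + pdRad G * (pdNum G * G.maxDegree) := by
    simpa [← hn, huniv, hcard] using G.card_pdSeq_le S (pdRad G)
  refine div_le_of_le_mul₀ (by positivity) (by positivity) ?_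
  have : (n : ℝ) ≤ pdNum G + pdRad G * (pdNum G * G.maxDegree) := by exact_mod_cast hbound
  linarith

theorem stmt_19 {V : Type*} [Fintype V] (G : SimpleGraph V) (n : ℕ)
    (hn : Fintype.card V = n) (hconn : G.Connected)
    (hDelta : 1 ≤ G.maxDegree) (hgamma : 1 ≤ pdNum G) :
    ((n : ℝ) - (pdNum G : ℝ)) / ((pdNum G : ℝ) * (G.maxDegree : ℝ)) ≤ (pdRad G : ℝ) :=
  stmt_19_general G n hn
end
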